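/- Let Ω ⊆ ℝⁿ be open, u : Ω → ℝᴺ continuously differentiable, and O an open set whose closure is compact and contained in Ω. Suppose σ is a Borel probability measure on ℝⁿ whose support is contained in the closure of O and which satisfies ∫ ‖Du‖_F² dσ = (sup_{x ∈ cl(O)} ‖Du(x)‖_F)². Let φ : ℝⁿ → ℝᴺ be continuously differentiable with φ = 0 on ∂O and ∫ Du : Dφ dσ = 0. Then sup_{x ∈ cl(O)} ‖Du(x)‖_F ≤ sup_{x ∈ cl(O)} ‖Du(x) + Dφ(x)‖_F. -/

import Mathlib

open MeasureTheory

/-- The Frobenius norm of an `N × n` real matrix: `‖A‖_F = sqrt(tr(Aᵀ A))`. -/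
noncomputable def frobNorm {N n : ℕ} (A : Matrix (Fin N) (Fin n) ℝ) : ℝ :=
  Real.sqrt (∑ α, ∑ i, (A α i) ^ 2)

/-- The trace inner product `A : B = tr(Aᵀ B)` on `N × n` real matrices. -/
noncomputable def frobInner {N n : ℕ} (A B : Matrix (Fin N) (Fin n) ℝ) : ℝ :=
  ∑ α, ∑ i, A α i * B α i

/-- The total derivative `Du(x)` regarded as an `N × n` real matrix. -/
noncomputable def gradMatrix {n N : ℕ}
    (u : EuclideanSpace ℝ (Fin n) → EuclideanSpace ℝ (Fin N))
    (x : EuclideanSpace ℝ (Fin n)) : Matrix (Fin N) (Fin n) ℝ :=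
  fun α i => fderiv ℝ u x (EuclideanSpace.single i (1 : ℝ)) α

lemma frobNorm_nonneg {N n : ℕ} (A : Matrix (Fin N) (Fin n) ℝ) : 0 ≤ frobNorm A :=
  Real.sqrt_nonneg _

lemma frobNorm_sq {N n : ℕ} (A : Matrix (Fin N) (Fin n) ℝ) :
    frobNorm A ^ 2 = ∑ α, ∑ i, (A α i) ^ 2 :=
  Real.sq_sqrt (by positivity)

theorem stmt0 {n N : ℕ}
    (Ω : Set (EuclideanSpace ℝ (Fin n))) (hΩ : IsOpen Ω)
    (u : EuclideanSpace ℝ (Fin n) → EuclideanSpace ℝ (Fin N))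
    (hu : ContDiffOn ℝ 1 u Ω)
    (O : Set (EuclideanSpace ℝ (Fin n))) (hO : IsOpen O)
    (hOc : IsCompact (closure O)) (hOΩ : closure O ⊆ Ω)
    (σ : Measure (EuclideanSpace ℝ (Fin n))) [IsProbabilityMeasure σ]
    (hsupp : σ (closure O)ᶜ = 0)
    (hconc : ∫ x, (frobNorm (gradMatrix u x)) ^ 2 ∂σ
      = (⨆ x ∈ closure O, frobNorm (gradMatrix u x)) ^ 2)
    (φ : EuclideanSpace ℝ (Fin n) → EuclideanSpace ℝ (Fin N))
    (hφ : ContDiff ℝ 1 φ)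
    (hφ0 : ∀ x ∈ frontier O, φ x = 0)
    (hdiv : ∫ x, frobInner (gradMatrix u x) (gradMatrix φ x) ∂σ = 0) :
    (⨆ x ∈ closure O, frobNorm (gradMatrix u x))
      ≤ ⨆ x ∈ closure O, frobNorm (gradMatrix u x + gradMatrix φ x) := by
  classical
  set S := closure O with hS
  -- S is nonempty
  have hSne : S.Nonempty := by
    by_contra h
    rw [Set.not_nonempty_iff_eq_empty] at h
    rw [h, Set.compl_empty] at hsupp
    simpa [hsupp] using (measure_univ (μ := σ))
  obtain ⟨x₀, hx₀⟩ := hSne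
  -- continuity of gradient entries on S
  have hgu : ∀ (α : Fin N) (i : Fin n),
      ContinuousOn (fun x => gradMatrix u x α i) S := by
    intro α i
    exact (((EuclideanSpace.proj α).continuous.comp
      (ContinuousLinearMap.apply ℝ (EuclideanSpace ℝ (Fin N))
        (EuclideanSpace.single i (1:ℝ))).continuous).comp_continuousOn
      (hu.continuousOn_fderiv_of_isOpen hΩ le_rfl)).mono hOΩ
  have hgφ : ∀ (α : Fin N) (i : Fin n),
      Continuous (fun x => gradMatrix φ x α i) := by
    intro α i
    exact ((EuclideanSpace.proj α).continuous.comp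
      (ContinuousLinearMap.apply ℝ (EuclideanSpace ℝ (Fin N))
        (EuclideanSpace.single i (1:ℝ))).continuous).comp
      (hφ.continuous_fderiv one_ne_zero)
  -- measurability of gradient entries
  have hmu : ∀ (α : Fin N) (i : Fin n),
      Measurable (fun x => gradMatrix u x α i) := by
    intro α i
    exact ((EuclideanSpace.proj α).continuous.measurable).comp
      (measurable_fderiv_apply_const ℝ u _)
  -- abbreviations
  set g2 : EuclideanSpace ℝ (Fin n) → ℝ := fun x => ∑ α, ∑ i, (gradMatrix u x α i) ^ 2
    with hg2
  set k : EuclideanSpace ℝ (Fin n) → ℝ := fun x => ∑ α, ∑ i, (gradMatrix φ x α i) ^ 2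
    with hk
  set ip : EuclideanSpace ℝ (Fin n) → ℝ :=
    fun x => frobInner (gradMatrix u x) (gradMatrix φ x) with hip
  set h2 : EuclideanSpace ℝ (Fin n) → ℝ :=
    fun x => ∑ α, ∑ i, ((gradMatrix u x + gradMatrix φ x) α i) ^ 2 with hh2
  set H : EuclideanSpace ℝ (Fin n) → ℝ :=
    fun x => frobNorm (gradMatrix u x + gradMatrix φ x) with hH
  set L : ℝ := ⨆ x ∈ S, frobNorm (gradMatrix u x) with hL
  set M : ℝ := ⨆ x ∈ S, H x with hM
  -- continuity on S of the combined quantities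
  have hg2c : ContinuousOn g2 S :=
    continuousOn_finset_sum _ fun α _ => continuousOn_finset_sum _ fun i _ => (hgu α i).pow 2
  have hkc : ContinuousOn k S :=
    continuousOn_finset_sum _ fun α _ => continuousOn_finset_sum _ fun i _ =>
      ((hgφ α i).continuousOn).pow 2
  have hipc : ContinuousOn ip S := by
    apply continuousOn_finset_sum _ fun α _ => continuousOn_finset_sum _ fun i _ => ?_
    exact (hgu α i).mul (hgφ α i).continuousOn
  have hh2c : ContinuousOn h2 S := by
    apply continuousOn_finset_sum _ fun α _ => continuousOn_finset_sum _ fun i _ => ?_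
    exact (((hgu α i).add (hgφ α i).continuousOn).pow 2).congr fun x _ => by
      simp [Matrix.add_apply]
  have hHc : ContinuousOn H S := by
    apply Real.continuous_sqrt.comp_continuousOn
    exact hh2c
  -- measurability
  have hg2m : Measurable g2 :=
    Finset.measurable_sum _ fun α _ => Finset.measurable_sum _ fun i _ => (hmu α i).pow_const 2
  have hkm : Measurable k :=
    (continuous_finset_sum _ fun α _ => continuous_finset_sum _ fun i _ =>
      (hgφ α i).pow 2).measurable
  have hipm : Measurable ip := by
    apply Finset.measurable_sum _ fun α _ => Finset.measurable_sum _ fun i _ => ?_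
    exact (hmu α i).mul (hgφ α i).measurable
  have hh2m : Measurable h2 := by
    apply Finset.measurable_sum _ fun α _ => Finset.measurable_sum _ fun i _ => ?_
    simp only [Matrix.add_apply]
    exact ((hmu α i).add (hgφ α i).measurable).pow_const 2
  -- the a.e. filter is supported on S
  have hae : ∀ᵐ x ∂σ, x ∈ S := by
    rw [MeasureTheory.ae_iff]
    exact measure_mono_null (fun x hx => hx) hsupp
  -- integrability from boundedness on S
  have mkInt : ∀ f : EuclideanSpace ℝ (Fin n) → ℝ, Measurable f → ContinuousOn f S →
      Integrable f σ := by
    intro f hm hc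
    obtain ⟨C, hC⟩ := hOc.exists_bound_of_continuousOn hc
    exact Integrable.mono' (integrable_const C) hm.aestronglyMeasurable
      (hae.mono fun x hx => hC x hx)
  have ig2 : Integrable g2 σ := mkInt _ hg2m hg2c
  have ik : Integrable k σ := mkInt _ hkm hkc
  have iip : Integrable ip σ := mkInt _ hipm hipc
  have ih2 : Integrable h2 σ := mkInt _ hh2m hh2c
  -- pointwise expansion
  have expand : ∀ x, h2 x = g2 x + 2 * ip x + k x := by
    intro x
    simp only [hh2, hg2, hip, hk, frobInner, Matrix.add_apply, Finset.mul_sum,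
      ← Finset.sum_add_distrib]
    exact Finset.sum_congr rfl fun α _ => Finset.sum_congr rfl fun i _ => by ring
  -- integral identity
  have hint : ∫ x, h2 x ∂σ = (∫ x, g2 x ∂σ) + 2 * (∫ x, ip x ∂σ) + ∫ x, k x ∂σ := by
    calc ∫ x, h2 x ∂σ = ∫ x, (g2 x + 2 * ip x + k x) ∂σ :=
          integral_congr_ae (Filter.Eventually.of_forall expand)
      _ = (∫ x, g2 x ∂σ) + 2 * (∫ x, ip x ∂σ) + ∫ x, k x ∂σ := by
          have i1 : Integrable (fun x => 2 * ip x) σ := iip.const_mul 2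
          have i2 : Integrable (fun x => g2 x + 2 * ip x) σ := ig2.add i1
          rw [integral_add i2 ik, integral_add ig2 i1, integral_const_mul]
  -- ∫ g2 = L ^ 2
  have hconc' : ∫ x, g2 x ∂σ = L ^ 2 := by
    rw [hL, ← hconc]
    exact integral_congr_ae (Filter.Eventually.of_forall fun x => (frobNorm_sq _).symm)
  -- ∫ k ≥ 0
  have hknn : 0 ≤ ∫ x, k x ∂σ :=
    integral_nonneg fun x => Finset.sum_nonneg fun α _ => Finset.sum_nonneg fun i _ => sq_nonneg _
  -- lower bound: L^2 ≤ ∫ h2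
  have hlow : L ^ 2 ≤ ∫ x, h2 x ∂σ := by
    rw [hint, hconc', hip] at *
    rw [hdiv]
    linarith
  -- M is an upper bound of H on S
  have hMbdd : BddAbove (H '' S) := (hOc.image_of_continuousOn hHc).bddAbove
  have hMbdd' : BddAbove (Set.range fun i : S => H i) := by
    rw [← Set.image_eq_range]; exact hMbdd
  have hnn : sSup (∅ : Set ℝ) ≤ ⨆ i : S, H ↑i := by
    rw [Real.sSup_empty]
    exact le_trans (frobNorm_nonneg _) (le_ciSup hMbdd' ⟨x₀, hx₀⟩)
  have hMeq : M = sSup (H '' S) := by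
    rw [hM, ← csSup_image hMbdd' hnn]
  have hMub : ∀ x ∈ S, H x ≤ M := fun x hx =>
    hMeq ▸ le_csSup hMbdd (Set.mem_image_of_mem H hx)
  have hM0 : 0 ≤ M := le_trans (frobNorm_nonneg _) (hMub x₀ hx₀)
  -- upper bound: ∫ h2 ≤ M ^ 2
  have hupp : ∫ x, h2 x ∂σ ≤ M ^ 2 := by
    have : ∫ x, h2 x ∂σ ≤ ∫ _x, M ^ 2 ∂σ := by
      apply integral_mono_ae ih2 (integrable_const _)
      refine hae.mono fun x hx => ?_
      have h1 : h2 x = H x ^ 2 := (frobNorm_sq _).symm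
      rw [h1]
      exact pow_le_pow_left₀ (frobNorm_nonneg _) (hMub x hx) 2
    simpa using this
  have : L ^ 2 ≤ M ^ 2 := le_trans hlow hupp
  nlinarith [this, hM0]
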